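/- arXiv:0709.1758 — 3 statements merged into one kernel-verified Lean document; each statement's English description precedes it below -/
import Mathlib

section
/- Let k ≥ 2 be an integer. Then ∑_{x=1}^{N} d_{k}(x)² ≪_k N (log N)^{k²-1} for N ≥ 2, where d_k(x) is the number of ordered factorizations x = a₁⋯a_k into k positive integers. -/
/-!
A pair of factorizations `x = u₁⋯u_k = v₁⋯v_k` has a common refinement: a `k × k` matrix of
positive integers whose row products are the `uᵢ` and whose column products are the `vⱼ`. Reading
the matrix as a factorization of `x` into `k²` factors shows `d_k(x)² ≤ d_{k²}(x)`. Summing,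
`∑_{x ≤ N} d_m(x)` counts the `m`-tuples of positive integers with product at most `N`; fixing the
first coordinate `a` leaves such `(m - 1)`-tuples for `N / a`, so induction and the harmonic bound
`∑_{a ≤ N} 1 / a ≤ 1 + log N` give `N (1 + log N) ^ (m - 1)`; finally `1 + log N ≤ 3 log N`
for `N ≥ 2`.
-/

open Finset

section Refinement

variable {α : Type*}

theorem exists_dvd_and_prod_eq_of_dvd_prod [CommMonoid α] [DecompositionMonoid α]
    [Subsingleton αˣ] : ∀ {n : ℕ} {v : Fin n → α} {a : α}, a ∣ ∏ j, v j →
      ∃ d : Fin n → α, (∀ j, d j ∣ v j) ∧ ∏ j, d j = a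
  | 0, _, _, h => ⟨fun _ => 1, fun _ => one_dvd _,
      (isUnit_iff_eq_one.mp (isUnit_of_dvd_one (by simpa using h))).symm⟩
  | n + 1, v, _, h => by
    rw [Fin.prod_univ_succ] at h
    obtain ⟨a₀, a', ha₀, ha', rfl⟩ := exists_dvd_and_dvd_of_dvd_mul h
    obtain ⟨d, hd, rfl⟩ := exists_dvd_and_prod_eq_of_dvd_prod ha'
    exact ⟨Fin.cons a₀ d, Fin.cases ha₀ hd, Fin.prod_cons a₀ d⟩

theorem exists_refinement_of_prod_eq [CommMonoidWithZero α] [IsLeftCancelMulZero α]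
    [DecompositionMonoid α] [Subsingleton αˣ] :
    ∀ {m n : ℕ} (u : Fin m → α) (v : Fin n → α), (∀ i, u i ≠ 0) → ∏ i, u i = ∏ j, v j →
      ∃ c : Fin m → Fin n → α, (∀ i, ∏ j, c i j = u i) ∧ ∀ j, ∏ i, c i j = v j
  | 0, _, _, v, _, h => ⟨Fin.elim0, fun i => i.elim0, fun j => by
      simpa using (isUnit_iff_eq_one.mp
        (isUnit_of_dvd_one ((dvd_prod_of_mem v (mem_univ j)).trans h.symm.dvd))).symm⟩
  | m + 1, _, u, v, hu, h => by
    -- the first row splits `u 0` along `v`; cancelling it leaves `v / d` for the remaining rows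
    obtain ⟨d, hd, hd_prod⟩ := exists_dvd_and_prod_eq_of_dvd_prod
      (h ▸ dvd_prod_of_mem u (mem_univ 0) : u 0 ∣ ∏ j, v j)
    choose w hw using hd
    have hw_prod : ∏ i : Fin m, u i.succ = ∏ j, w j := by
      refine mul_left_cancel₀ (hu 0) ?_
      rw [← Fin.prod_univ_succ, h, ← hd_prod, ← prod_mul_distrib]
      exact prod_congr rfl fun j _ => hw j
    obtain ⟨c, hrow, hcol⟩ :=
      exists_refinement_of_prod_eq (fun i => u i.succ) w (fun i => hu i.succ) hw_prod
    refine ⟨Fin.cons d c, Fin.cases hd_prod hrow, fun j => ?_⟩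
    simp only [Fin.prod_univ_succ, Fin.cons_zero, Fin.cons_succ, hcol, hw]

end Refinement

theorem sum_Icc_div_le_mul_one_add_log (N : ℕ) :
    ∑ a ∈ Icc 1 N, (N : ℝ) / a ≤ N * (1 + Real.log N) := by
  have h := harmonic_le_one_add_log N
  rw [harmonic_eq_sum_Icc] at h
  push_cast at h
  simp_rw [div_eq_mul_inv, ← mul_sum]
  exact mul_le_mul_of_nonneg_left h (Nat.cast_nonneg N)

namespace Nat

theorem filter_piFinset_Icc_prod_eq {k x : ℕ} (hx : x ≠ 0) :
    ((Fintype.piFinset fun _ : Fin k => Icc 1 x).filter fun v => ∏ i, v i = x) =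
      finMulAntidiag k x := by
  ext v
  simp only [mem_filter, Fintype.mem_piFinset, mem_Icc, mem_finMulAntidiag]
  refine ⟨fun h => ⟨h.2, hx⟩, fun h => ⟨fun i => ?_, h.1⟩⟩
  have hv : v ∈ finMulAntidiag k x := mem_finMulAntidiag.mpr h
  exact ⟨pos_of_ne_zero (ne_zero_of_mem_finMulAntidiag hv i),
    le_of_dvd (pos_of_ne_zero hx) (dvd_of_mem_finMulAntidiag hv i)⟩

theorem card_finMulAntidiag_mul_le (k l n : ℕ) :
    #(finMulAntidiag k n) * #(finMulAntidiag l n) ≤ #(finMulAntidiag (k * l) n) := by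
  rw [← card_product]
  let e : Fin k × Fin l ≃ Fin (k * l) := finProdFinEquiv
  refine card_le_card_of_surjOn
    (fun w => (fun i => ∏ j, w (e (i, j)), fun j => ∏ i, w (e (i, j)))) ?_
  rintro ⟨u, v⟩ huv
  simp only [coe_product, Set.mem_prod, mem_coe] at huv
  obtain ⟨hu, hv⟩ := huv
  obtain ⟨c, hrow, hcol⟩ := exists_refinement_of_prod_eq u v (ne_zero_of_mem_finMulAntidiag hu)
    (by rw [prod_eq_of_mem_finMulAntidiag hu, prod_eq_of_mem_finMulAntidiag hv])
  refine ⟨fun p => c (e.symm p).1 (e.symm p).2, ?_, ?_⟩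
  · rw [mem_coe, mem_finMulAntidiag, ← e.prod_comp, Fintype.prod_prod_type]
    simp only [Equiv.symm_apply_apply, hrow]
    exact mem_finMulAntidiag.mp hu
  · simp only [Equiv.symm_apply_apply, hrow, hcol]

def finMulLE (m N : ℕ) : Finset (Fin m → ℕ) :=
  (Fintype.piFinset fun _ => Icc 1 N).filter fun v => ∏ i, v i ≤ N

theorem card_finMulLE_eq_sum (m N : ℕ) :
    #(finMulLE m N) = ∑ x ∈ Icc 1 N, #(finMulAntidiag m x) := by
  refine (card_eq_sum_card_fiberwise (f := fun v => ∏ i, v i) fun v hv => ?_).trans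
    (sum_congr rfl fun x hx => ?_)
  · simp only [finMulLE, coe_filter, Fintype.mem_piFinset, mem_Icc, Set.mem_ofPred_eq] at hv
    exact mem_Icc.mpr ⟨one_le_prod' fun i _ => (hv.1 i).1, hv.2⟩
  · rw [mem_Icc] at hx
    rw [finMulLE, filter_filter, ← filter_piFinset_Icc_prod_eq (one_le_iff_ne_zero.mp hx.1)]
    congr 1
    ext v
    simp only [mem_filter, Fintype.mem_piFinset, mem_Icc]
    constructor
    · rintro ⟨hv, -, rfl⟩
      exact ⟨fun i => ⟨(hv i).1, single_le_prod' (fun j _ => (hv j).1) (mem_univ i)⟩, rfl⟩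
    · rintro ⟨hv, rfl⟩
      exact ⟨fun i => ⟨(hv i).1, (hv i).2.trans hx.2⟩, hx.2, rfl⟩

theorem card_finMulLE_zero_le (N : ℕ) : #(finMulLE 0 N) ≤ N := by
  rcases N with _ | N
  · simp [finMulLE]
  · exact card_le_one_of_subsingleton _ |>.trans (by omega)

theorem card_finMulLE_one_le (N : ℕ) : #(finMulLE 1 N) ≤ N := by
  refine (card_filter_le _ _).trans ?_
  simp

theorem card_finMulLE_succ_le_sum (m N : ℕ) :
    #(finMulLE (m + 1) N) ≤ ∑ a ∈ Icc 1 N, #(finMulLE m (N / a)) := by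
  calc #(finMulLE (m + 1) N)
      ≤ #((Icc 1 N).biUnion fun a =>
          (finMulLE m (N / a)).image fun t => (Fin.cons a t : Fin (m + 1) → ℕ)) :=
        card_le_card fun v hv => ?_
    _ ≤ ∑ a ∈ Icc 1 N,
          #((finMulLE m (N / a)).image fun t => (Fin.cons a t : Fin (m + 1) → ℕ)) :=
        card_biUnion_le
    _ ≤ ∑ a ∈ Icc 1 N, #(finMulLE m (N / a)) := sum_le_sum fun a _ => Finset.card_image_le
  simp only [finMulLE, mem_filter, Fintype.mem_piFinset, mem_Icc] at hv
  obtain ⟨hv, hprod⟩ := hv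
  rw [Fin.prod_univ_succ] at hprod
  have htail : ∏ i, Fin.tail v i ≤ N / v 0 :=
    (le_div_iff_mul_le (hv 0).1).mpr (mul_comm (v 0) _ ▸ hprod)
  refine mem_biUnion.mpr
    ⟨v 0, mem_Icc.mpr (hv 0), mem_image.mpr ⟨Fin.tail v, ?_, Fin.cons_self_tail v⟩⟩
  simp only [finMulLE, mem_filter, Fintype.mem_piFinset, mem_Icc]
  exact ⟨fun i => ⟨(hv i.succ).1,
    (single_le_prod' (fun j _ => (hv j.succ).1) (mem_univ i)).trans htail⟩, htail⟩

theorem card_finMulLE_succ_le (m N : ℕ) :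
    (#(finMulLE (m + 1) N) : ℝ) ≤ N * (1 + Real.log N) ^ m := by
  induction m generalizing N with
  | zero => simpa using (cast_le (α := ℝ)).mpr (card_finMulLE_one_le N)
  | succ m ih =>
    calc (#(finMulLE (m + 2) N) : ℝ)
        ≤ ∑ a ∈ Icc 1 N, (#(finMulLE (m + 1) (N / a)) : ℝ) := by
          exact_mod_cast card_finMulLE_succ_le_sum (m + 1) N
      _ ≤ ∑ a ∈ Icc 1 N, (N : ℝ) / a * (1 + Real.log N) ^ m := sum_le_sum fun a ha => ?_
      _ = (∑ a ∈ Icc 1 N, (N : ℝ) / a) * (1 + Real.log N) ^ m := (sum_mul ..).symm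
      _ ≤ (N : ℝ) * (1 + Real.log N) * (1 + Real.log N) ^ m := by
          gcongr
          exact sum_Icc_div_le_mul_one_add_log N
      _ = (N : ℝ) * (1 + Real.log N) ^ (m + 1) := by ring
    obtain ⟨ha, haN⟩ := mem_Icc.mp ha
    calc (#(finMulLE (m + 1) (N / a)) : ℝ)
        ≤ ((N / a : ℕ) : ℝ) * (1 + Real.log (N / a : ℕ)) ^ m := ih _
      _ ≤ (N : ℝ) / a * (1 + Real.log N) ^ m := by
        gcongr
        · exact Nat.cast_div_le
        · exact_mod_cast Nat.div_pos haN ha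
        · exact Nat.div_le_self N a

theorem card_finMulLE_le (m N : ℕ) :
    (#(finMulLE m N) : ℝ) ≤ N * (1 + Real.log N) ^ (m - 1) := by
  rcases m with _ | m
  · simpa using (cast_le (α := ℝ)).mpr (card_finMulLE_zero_le N)
  · exact card_finMulLE_succ_le m N

end Nat

theorem divisor_function_square_mean_general (k : ℕ) :
    ∃ C > 0, ∀ N : ℕ, 2 ≤ N →
      (∑ x ∈ Finset.Icc 1 N,
          (((Fintype.piFinset fun _ : Fin k => Finset.Icc 1 x).filter
              fun v => ∏ i, v i = x).card : ℝ) ^ 2) ≤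
        C * N * Real.log N ^ (k ^ 2 - 1) := by
  refine ⟨3 ^ (k ^ 2 - 1), by positivity, fun N hN => ?_⟩
  have hlog : 1 / 2 < Real.log N := by
    have : Real.log 2 ≤ Real.log N := Real.log_le_log two_pos (by exact_mod_cast hN)
    linarith [Real.log_two_gt_d9]
  calc ∑ x ∈ Icc 1 N,
        (#((Fintype.piFinset fun _ : Fin k => Icc 1 x).filter fun v => ∏ i, v i = x) : ℝ) ^ 2
      = ∑ x ∈ Icc 1 N, (#(Nat.finMulAntidiag k x) : ℝ) ^ 2 :=
        sum_congr rfl fun x hx => by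
          rw [Nat.filter_piFinset_Icc_prod_eq (by grind)]
    _ ≤ ∑ x ∈ Icc 1 N, (#(Nat.finMulAntidiag (k ^ 2) x) : ℝ) :=
        sum_le_sum fun x _ => by
          rw [sq, sq]
          exact_mod_cast Nat.card_finMulAntidiag_mul_le k k x
    _ = #(Nat.finMulLE (k ^ 2) N) := by rw [Nat.card_finMulLE_eq_sum]; push_cast; rfl
    _ ≤ N * (1 + Real.log N) ^ (k ^ 2 - 1) := Nat.card_finMulLE_le _ _
    _ ≤ N * (3 * Real.log N) ^ (k ^ 2 - 1) := by gcongr; linarith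
    _ = 3 ^ (k ^ 2 - 1) * N * Real.log N ^ (k ^ 2 - 1) := by ring

theorem divisor_function_square_mean (k : ℕ) (hk : 2 ≤ k) :
    ∃ C > 0, ∀ N : ℕ, 2 ≤ N →
      (∑ x ∈ Finset.Icc 1 N,
          (((Fintype.piFinset fun _ : Fin k => Finset.Icc 1 x).filter
              fun v => ∏ i, v i = x).card : ℝ) ^ 2) ≤
        C * N * Real.log N ^ (k ^ 2 - 1) :=
  divisor_function_square_mean_general k
end

section
/- Suppose d is a positive integer, b_d an integer, ψ(x) = a₁x^k + ... + a_k x a polynomial with integer coefficients, and write ψ(dr + b_d) = a₁'r^k + a₂'r^{k-1} + ... + a_k'r + a_{k+1}' as a polynomial in r. Then for any positive integer q, gcd(q, a₁', ..., a_k') ≤ d^{k(k+1)/2} · gcd(q, a₁, ..., a_k). -/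
open Polynomial Finset

private lemma coeff_comp_C_mul_X (p : Polynomial ℤ) (c : ℤ) (n : ℕ) :
    (p.comp (Polynomial.C c * Polynomial.X)).coeff n = c ^ n * p.coeff n := by
  induction p using Polynomial.induction_on' with
  | add p q hp hq =>
      rw [add_comp, coeff_add, hp, hq, coeff_add, mul_add]
  | monomial i a =>
      rw [monomial_comp, mul_pow, ← C_pow, ← mul_assoc, ← C_mul, coeff_C_mul_X_pow,
        coeff_monomial]
      by_cases h : i = n
      · simp [h, mul_comm]
      · simp only [if_neg h, if_neg (Ne.symm h), mul_zero]

theorem gcd_coeff_substitution (d : ℕ) (hd : 0 < d) (bd : ℤ) (k : ℕ) (hk : 0 < k)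
    (ψ : Polynomial ℤ) (hdeg : ψ.natDegree ≤ k) (h0 : ψ.coeff 0 = 0)
    (q : ℤ) (hq : 0 < q) :
    gcd q (Finset.gcd (Finset.Icc 1 k) fun i =>
        (ψ.comp (Polynomial.C (d : ℤ) * Polynomial.X + Polynomial.C bd)).coeff i) ≤
      (d : ℤ) ^ (k * (k + 1) / 2) * gcd q (Finset.gcd (Finset.Icc 1 k) fun i => ψ.coeff i) := by
  set ρ : Polynomial ℤ := Polynomial.taylor bd ψ with hρ
  set φ : Polynomial ℤ := ψ.comp (Polynomial.C (d : ℤ) * Polynomial.X + Polynomial.C bd) with hφ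
  set g' : ℤ := gcd q (Finset.gcd (Finset.Icc 1 k) fun i => φ.coeff i) with hg'
  set N : ℕ := k * (k + 1) / 2 with hN
  -- φ = ρ.comp (C d * X)
  have hcomp : φ = ρ.comp (Polynomial.C (d : ℤ) * Polynomial.X) := by
    rw [hφ, hρ, taylor_apply, Polynomial.comp_assoc, add_comp, X_comp, C_comp]
  have hcoeffφ : ∀ j, φ.coeff j = (d : ℤ) ^ j * ρ.coeff j := by
    intro j; rw [hcomp, coeff_comp_C_mul_X]
  have hdegρ : ρ.natDegree ≤ k := by rw [hρ, natDegree_taylor]; exact hdeg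
  -- ψ.coeff i as a combination of ρ's coefficients
  have hψρ : Polynomial.taylor (-bd) ρ = ψ := by
    rw [hρ, taylor_taylor]; simp
  have hψcoeff : ∀ i, ψ.coeff i =
      ∑ m ∈ Finset.range (k + 1), ((m + i).choose i : ℤ) * ρ.coeff (m + i) * (-bd) ^ m := by
    intro i
    have hdh : (Polynomial.hasseDeriv i ρ).natDegree < k + 1 :=
      lt_of_le_of_lt (le_trans (natDegree_hasseDeriv_le ρ i)
        (le_trans (Nat.sub_le _ _) hdegρ)) (Nat.lt_succ_self k)
    rw [← hψρ, taylor_coeff, eval_eq_sum_range' hdh]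
    exact Finset.sum_congr rfl fun m _ => by rw [hasseDeriv_coeff]
  -- g' divides d^k * ρ.coeff j for j ≥ 1
  have hdvdρ : ∀ j, 1 ≤ j → g' ∣ (d : ℤ) ^ k * ρ.coeff j := by
    intro j hj
    by_cases hjk : j ≤ k
    · have : (d : ℤ) ^ k * ρ.coeff j = (d : ℤ) ^ (k - j) * φ.coeff j := by
        rw [hcoeffφ, ← mul_assoc, ← pow_add, Nat.sub_add_cancel hjk]
      rw [this]
      exact Dvd.dvd.mul_left
        ((gcd_dvd_right q _).trans (Finset.gcd_dvd (Finset.mem_Icc.mpr ⟨hj, hjk⟩))) _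
    · have : ρ.coeff j = 0 :=
        Polynomial.coeff_eq_zero_of_natDegree_lt (lt_of_le_of_lt hdegρ (not_le.mp hjk))
      simp [this]
  -- hence g' divides d^k * ψ.coeff i for all i ≥ 1
  have hdvdψ : ∀ i, 1 ≤ i → g' ∣ (d : ℤ) ^ k * ψ.coeff i := by
    intro i hi
    rw [hψcoeff i, Finset.mul_sum]
    refine Finset.dvd_sum fun m _ => ?_
    have : (d : ℤ) ^ k * (((m + i).choose i : ℤ) * ρ.coeff (m + i) * (-bd) ^ m) =
        ((m + i).choose i : ℤ) * ((d : ℤ) ^ k * ρ.coeff (m + i)) * (-bd) ^ m := by ring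
    rw [this]
    exact ((hdvdρ (m + i) (by omega)).mul_left _).mul_right _
  have hkN : k ≤ N := by
    rw [hN, Nat.le_div_iff_mul_le (by norm_num)]
    nlinarith
  -- g' divides d^N * (gcd q G)
  have hdN : g' ∣ (d : ℤ) ^ N * gcd q (Finset.gcd (Finset.Icc 1 k) fun i => ψ.coeff i) := by
    have h1 : g' ∣ (d : ℤ) ^ N * q := (gcd_dvd_left q _).mul_left _
    have h2 : g' ∣ Finset.gcd (Finset.Icc 1 k) fun i => (d : ℤ) ^ N * ψ.coeff i := by
      refine Finset.dvd_gcd fun i hi => ?_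
      obtain ⟨hi1, hik⟩ := Finset.mem_Icc.mp hi
      have : (d : ℤ) ^ N * ψ.coeff i = (d : ℤ) ^ (N - k) * ((d : ℤ) ^ k * ψ.coeff i) := by
        rw [← mul_assoc, ← pow_add, Nat.sub_add_cancel hkN]
      rw [this]
      exact (hdvdψ i hi1).mul_left _
    have hnorm : normalize ((d : ℤ) ^ N) = (d : ℤ) ^ N :=
      Int.normalize_of_nonneg (by positivity)
    have heq : (d : ℤ) ^ N * gcd q (Finset.gcd (Finset.Icc 1 k) fun i => ψ.coeff i) =
        gcd ((d : ℤ) ^ N * q) (Finset.gcd (Finset.Icc 1 k) fun i => (d : ℤ) ^ N * ψ.coeff i) := by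
      rw [Finset.gcd_mul_left, hnorm, _root_.gcd_mul_left, hnorm]
    rw [heq]
    exact dvd_gcd h1 h2
  have hgpos : 0 < gcd q (Finset.gcd (Finset.Icc 1 k) fun i => ψ.coeff i) := by
    have := Int.gcd_pos_of_ne_zero_left (Finset.gcd (Finset.Icc 1 k) fun i => ψ.coeff i) hq.ne'
    rw [← Int.coe_gcd]
    exact_mod_cast this
  exact Int.le_of_dvd (mul_pos (by positivity) hgpos) hdN
end

section
/- Let n, m, q, t be positive integers with m q^t ≤ n, let 0 < δ, ε with δ + ε ≤ 1, and A ⊆ {1,...,n} with |A| = δn. Suppose |{1 ≤ b ≤ n - mq^t : |A ∩ 𝔸_m(b,q^t)| ≥ (δ+ε)m}| < εn, where 𝔸_m(b,d) = {b, b+d, ..., b+(m-1)d}. Then ∑_{b=1}^{n-mq^t} | |A ∩ 𝔸_m(b,q^t)| - δm | ≤ 4εnm + 4m²q^t. -/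
/-! Summing over the `m` shifts `c * q ^ t` shows that the progression counts
`|A ∩ 𝔸_m(b, q ^ t)|` add up to at least `m |A| - m² q ^ t`, so on average they are at least
`δ m` up to that error. Since `|x| = 2 x⁺ - x`, the L¹ deviation is then controlled by the
positive parts, which are at most `m` on the fewer than `ε n` large counts and at most `ε m`
elsewhere. -/

open Finset

def arithProg (m b d : ℕ) : Finset ℕ :=
  (range m).image fun c => b + c * d

lemma card_inter_arithProg_le (A : Finset ℕ) (m b d : ℕ) : #(A ∩ arithProg m b d) ≤ m :=
  (card_le_card inter_subset_right).trans (card_image_le.trans (card_range m).le)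

lemma card_inter_arithProg {d : ℕ} (hd : 0 < d) (A : Finset ℕ) (m b : ℕ) :
    #(A ∩ arithProg m b d) = #{c ∈ range m | b + c * d ∈ A} := by
  have hinj : Function.Injective fun c => b + c * d := fun x y h =>
    Nat.eq_of_mul_eq_mul_right hd (Nat.add_left_cancel h)
  rw [arithProg, inter_comm, ← filter_mem_eq_inter, filter_image, card_image_of_injective _ hinj]

lemma sum_card_inter_arithProg {d : ℕ} (hd : 0 < d) (A s : Finset ℕ) (m : ℕ) :
    ∑ b ∈ s, #(A ∩ arithProg m b d) = ∑ c ∈ range m, #{b ∈ s | b + c * d ∈ A} := by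
  simp_rw [card_inter_arithProg hd, card_filter]
  exact sum_comm

lemma card_filter_add_mem_Icc (A : Finset ℕ) (N k : ℕ) :
    #{b ∈ Icc 1 N | b + k ∈ A} = #(A ∩ Icc (1 + k) (N + k)) :=
  card_nbij' (· + k) (· - k)
    (fun b hb => by simp only [coe_filter, Set.mem_ofPred_eq, mem_Icc] at hb; simp [hb.2]; omega)
    (fun a ha => by
      simp only [coe_inter, Set.mem_inter_iff, mem_coe, mem_Icc] at ha
      simp only [coe_filter, Set.mem_ofPred_eq, mem_Icc, Nat.sub_add_cancel (by omega : k ≤ a)]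
      exact ⟨by omega, ha.1⟩)
    (fun b _ => Nat.add_sub_cancel b k)
    (fun a ha => by simp only [coe_inter, Set.mem_inter_iff, mem_coe, mem_Icc] at ha; simp; omega)

lemma card_le_card_inter_add_card_sdiff {α : Type*} [DecidableEq α] {A U : Finset α}
    (hA : A ⊆ U) (I : Finset α) : #A ≤ #(A ∩ I) + #(U \ I) := by
  rw [← card_inter_add_card_sdiff A I]
  exact Nat.add_le_add_left (card_le_card (sdiff_subset_sdiff hA le_rfl)) _

lemma card_le_card_filter_add_mem_add {A : Finset ℕ} {N L k : ℕ} (hA : A ⊆ Icc 1 (N + L))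
    (hk : k ≤ L) : #A ≤ #{b ∈ Icc 1 N | b + k ∈ A} + L := by
  have hI : Icc (1 + k) (N + k) ⊆ Icc 1 (N + L) := Icc_subset_Icc (by omega) (by omega)
  calc #A ≤ #(A ∩ Icc (1 + k) (N + k)) + #(Icc 1 (N + L) \ Icc (1 + k) (N + k)) :=
        card_le_card_inter_add_card_sdiff hA _
    _ = #{b ∈ Icc 1 N | b + k ∈ A} + L := by
        rw [card_filter_add_mem_Icc, card_sdiff_of_subset hI, Nat.card_Icc, Nat.card_Icc]
        omega

lemma mul_card_le_sum_card_inter_arithProg {A : Finset ℕ} {N m d : ℕ} (hd : 0 < d)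
    (hA : A ⊆ Icc 1 (N + m * d)) :
    m * #A ≤ ∑ b ∈ Icc 1 N, #(A ∩ arithProg m b d) + m * (m * d) := by
  calc m * #A = ∑ _c ∈ range m, #A := by simp
    _ ≤ ∑ c ∈ range m, (#{b ∈ Icc 1 N | b + c * d ∈ A} + m * d) :=
        sum_le_sum fun c hc =>
          card_le_card_filter_add_mem_add hA (Nat.mul_le_mul_right d (mem_range.1 hc).le)
    _ = ∑ b ∈ Icc 1 N, #(A ∩ arithProg m b d) + m * (m * d) := by
        simp [sum_add_distrib, sum_card_inter_arithProg hd]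

lemma Finset.sum_abs_eq_two_mul_sum_posPart_sub_sum {ι : Type*} (s : Finset ι) (g : ι → ℝ) :
    ∑ i ∈ s, |g i| = 2 * ∑ i ∈ s, (g i)⁺ - ∑ i ∈ s, g i := by
  rw [eq_sub_iff_add_eq, ← sum_add_distrib, mul_sum]
  exact sum_congr rfl fun i _ => by rw [abs_add_eq_two_nsmul_posPart, two_nsmul, two_mul]

section LargeValues

variable {ι : Type*} {s : Finset ι} {f : ι → ℝ} {M μ η : ℝ}

lemma sum_posPart_sub_le (hf : ∀ i ∈ s, f i ≤ M) (hμ : 0 ≤ μ) (hη : 0 ≤ η) :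
    ∑ i ∈ s, (f i - μ)⁺ ≤ #{i ∈ s | μ + η ≤ f i} * M + #s * η := by
  rw [← sum_filter_add_sum_filter_not s fun i => μ + η ≤ f i]
  gcongr
  · refine (sum_le_card_nsmul _ _ M fun i hi => ?_).trans (nsmul_eq_mul _ _).le
    obtain ⟨hi, hlarge⟩ := mem_filter.1 hi
    have := hf i hi
    exact max_le (by linarith) (by linarith)
  · refine (sum_le_card_nsmul _ _ η fun i hi => ?_).trans ?_
    · have := (mem_filter.1 hi).2
      exact max_le (by linarith) hη
    · rw [nsmul_eq_mul]
      gcongr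
      exact filter_subset _ _

lemma sum_abs_sub_le_of_sum_ge (hf : ∀ i ∈ s, f i ≤ M) (hμ : 0 ≤ μ) (hη : 0 ≤ η) {E : ℝ}
    (hsum : #s * μ - E ≤ ∑ i ∈ s, f i) :
    ∑ i ∈ s, |f i - μ| ≤ 2 * (#{i ∈ s | μ + η ≤ f i} * M + #s * η) + E := by
  have hpos := sum_posPart_sub_le hf hμ hη
  rw [sum_abs_eq_two_mul_sum_posPart_sub_sum, sum_sub_distrib, sum_const, nsmul_eq_mul]
  linarith

end LargeValues

theorem l1_deviation_of_progression_counts_general (n m q t : ℕ)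
    (hq : 0 < q) (hmq : m * q ^ t ≤ n)
    (δ ε : ℝ) (hδ : 0 < δ) (hε : 0 < ε)
    (A : Finset ℕ) (hA : A ⊆ Finset.Icc 1 n) (hcard : (A.card : ℝ) = δ * n)
    (hfew : (((Finset.Icc 1 (n - m * q ^ t)).filter fun b =>
        (δ + ε) * m ≤ ((A ∩ (Finset.range m).image fun c => b + c * q ^ t).card : ℝ)).card : ℝ)
        < ε * n) :
    (∑ b ∈ Finset.Icc 1 (n - m * q ^ t),
        |((A ∩ (Finset.range m).image fun c => b + c * q ^ t).card : ℝ) - δ * m|) ≤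
      4 * ε * n * m + 4 * m ^ 2 * q ^ t := by
  change (#{b ∈ Icc 1 (n - m * q ^ t) | (δ + ε) * m ≤ (#(A ∩ arithProg m b (q ^ t)) : ℝ)} : ℝ)
    < ε * n at hfew
  change ∑ b ∈ Icc 1 (n - m * q ^ t), |(#(A ∩ arithProg m b (q ^ t)) : ℝ) - δ * m| ≤ _
  set d := q ^ t
  set N := n - m * d
  have hNn : N + m * d = n := Nat.sub_add_cancel hmq
  have hcount : (m : ℝ) * #A ≤ ∑ b ∈ Icc 1 N, (#(A ∩ arithProg m b d) : ℝ) + m * (m * d) := by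
    exact_mod_cast mul_card_le_sum_card_inter_arithProg (pow_pos hq t) (hNn ▸ hA)
  have hNnR : (N : ℝ) + m * d = n := by exact_mod_cast hNn
  have hIcc : (#(Icc 1 N) : ℝ) = N := by simp
  have hsum : (#(Icc 1 N) : ℝ) * (δ * m) - m ^ 2 * d
      ≤ ∑ b ∈ Icc 1 N, (#(A ∩ arithProg m b d) : ℝ) := by
    rw [hIcc]
    rw [hcard, ← hNnR] at hcount
    nlinarith [mul_nonneg (mul_nonneg hδ.le (sq_nonneg (m : ℝ))) (Nat.cast_nonneg d)]
  calc _ ≤ 2 * (#{b ∈ Icc 1 N | δ * m + ε * m ≤ (#(A ∩ arithProg m b d) : ℝ)} * (m : ℝ)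
          + #(Icc 1 N) * (ε * m)) + m ^ 2 * d :=
        sum_abs_sub_le_of_sum_ge (fun b _ => Nat.cast_le.2 (card_inter_arithProg_le A m b d))
          (by positivity) (by positivity) hsum
    _ ≤ 4 * ε * n * m + 4 * m ^ 2 * q ^ t := by
        have hN : (N : ℝ) ≤ n := by exact_mod_cast Nat.sub_le n _
        have hd : (d : ℝ) = q ^ t := by simp [d]
        rw [hIcc, ← add_mul, ← hd]
        have hm0 : (0 : ℝ) ≤ m := Nat.cast_nonneg m
        nlinarith [mul_le_mul_of_nonneg_right hfew.le hm0,
          mul_le_mul_of_nonneg_right hN (mul_nonneg hε.le hm0),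
          (by positivity : (0 : ℝ) ≤ m ^ 2 * d)]

theorem l1_deviation_of_progression_counts (n m q t : ℕ) (hn : 0 < n) (hm : 0 < m)
    (hq : 0 < q) (ht : 0 < t) (hmq : m * q ^ t ≤ n)
    (δ ε : ℝ) (hδ : 0 < δ) (hε : 0 < ε) (hδε : δ + ε ≤ 1)
    (A : Finset ℕ) (hA : A ⊆ Finset.Icc 1 n) (hcard : (A.card : ℝ) = δ * n)
    (hfew : (((Finset.Icc 1 (n - m * q ^ t)).filter fun b =>
        (δ + ε) * m ≤ ((A ∩ (Finset.range m).image fun c => b + c * q ^ t).card : ℝ)).card : ℝ)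
        < ε * n) :
    (∑ b ∈ Finset.Icc 1 (n - m * q ^ t),
        |((A ∩ (Finset.range m).image fun c => b + c * q ^ t).card : ℝ) - δ * m|) ≤
      4 * ε * n * m + 4 * m ^ 2 * q ^ t :=
  l1_deviation_of_progression_counts_general n m q t hq hmq δ ε hδ hε A hA hcard hfew
end
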